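/- For every integer k ≥ 0 one has σ²·H(2k+1)² < 2·(P(2k+2)² − 1) and 2·(P(2k+2)² − 1)·P(2k) < P(2k+2)·H(2k+1)²; equivalently, for k ≥ 1, σ² < 2(P(2k+2)² − 1)/H(2k+1)² < P(2k+2)/P(2k). -/
import Mathlib


/-- Pell numbers: P 0 = 0, P 1 = 1, P (m+2) = 2·P (m+1) + P m. -/
def pell : ℕ → ℕ
  | 0 => 0
  | 1 => 1
  | m + 2 => 2 * pell (m + 1) + pell m

/-- Half-companion Pell numbers: H 0 = 1, H 1 = 1, H (m+2) = 2·H (m+1) + H m. -/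
def hpell : ℕ → ℕ
  | 0 => 1
  | 1 => 1
  | m + 2 => 2 * hpell (m + 1) + hpell m

/-- The silver ratio σ = 1 + √2. -/
noncomputable def silver : ℝ := 1 + Real.sqrt 2

lemma pell_pos : ∀ n, 1 ≤ pell (n + 1)
  | 0 => le_refl 1
  | n + 1 => by
    have := pell_pos n
    show 1 ≤ 2 * pell (n + 1) + pell n
    omega

lemma pell_key : ∀ n : ℕ, (pell (n+1) : ℤ)^2 - 2 * pell n * pell (n+1) - (pell n : ℤ)^2 = (-1)^n
  | 0 => by norm_num [pell]
  | n + 1 => by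
    have ih := pell_key n
    have h : (pell (n+2) : ℤ) = 2 * pell (n+1) + pell n := by
      norm_cast
    rw [h, pow_succ]
    ring_nf
    ring_nf at ih
    linarith

lemma hpell_pell : ∀ n, hpell n + pell n = pell (n + 1)
  | 0 => rfl
  | 1 => rfl
  | n + 2 => by
    have h1 : hpell (n+1) + pell (n+1) = pell (n+2) := hpell_pell (n + 1)
    have h0 : hpell n + pell n = pell (n+1) := hpell_pell n
    show 2 * hpell (n+1) + hpell n + pell (n+2) = 2 * pell (n+2) + pell (n+1)
    have h2 : pell (n+2) = 2 * pell (n+1) + pell n := rfl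
    omega

theorem stmt_1 (k : ℕ) :
    silver ^ 2 * (hpell (2*k+1) : ℝ) ^ 2 < 2 * ((pell (2*k+2) : ℝ) ^ 2 - 1) ∧
    2 * ((pell (2*k+2) : ℝ) ^ 2 - 1) * (pell (2*k) : ℝ) <
      (pell (2*k+2) : ℝ) * (hpell (2*k+1) : ℝ) ^ 2 := by
  have hrec : pell (2*k+2) = 2 * pell (2*k+1) + pell (2*k) := rfl
  have hH : hpell (2*k+1) + pell (2*k+1) = pell (2*k+2) := hpell_pell (2*k+1)
  have hkeyR : (pell (2*k+2) : ℝ)^2 - 2*(pell (2*k+1) : ℝ)*(pell (2*k+2) : ℝ)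
      - (pell (2*k+1) : ℝ)^2 = -1 := by
    have h := pell_key (2*k+1)
    have hsign : ((-1 : ℤ))^(2*k+1) = -1 := by simp [pow_succ, pow_mul]
    rw [hsign] at h
    exact_mod_cast h
  have hHR : (hpell (2*k+1) : ℝ) = (pell (2*k+2) : ℝ) - (pell (2*k+1) : ℝ) := by
    have := congrArg (Nat.cast : ℕ → ℝ) hH
    push_cast at this
    linarith
  have hcR : (pell (2*k) : ℝ) = (pell (2*k+2) : ℝ) - 2*(pell (2*k+1) : ℝ) := by
    have := congrArg (Nat.cast : ℕ → ℝ) hrec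
    push_cast at this
    linarith
  have ha1 : (1:ℝ) ≤ (pell (2*k+1) : ℝ) := by exact_mod_cast pell_pos (2*k)
  have hbaN : 2 * pell (2*k+1) ≤ pell (2*k+2) := by rw [hrec]; omega
  have hba : 2*(pell (2*k+1) : ℝ) ≤ (pell (2*k+2) : ℝ) := by exact_mod_cast hbaN
  set a : ℝ := (pell (2*k+1) : ℝ)
  set b : ℝ := (pell (2*k+2) : ℝ)
  have hs2 : Real.sqrt 2 ^ 2 = 2 := Real.sq_sqrt (by norm_num)
  have hs2nn : 0 ≤ Real.sqrt 2 := Real.sqrt_nonneg 2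
  have hbpos : (0:ℝ) < b := by linarith
  have hsb : Real.sqrt 2 * b < a + b := by
    have h1 : (Real.sqrt 2 * b)^2 < (a + b)^2 := by
      have h2 : (Real.sqrt 2 * b)^2 = 2 * b^2 := by rw [mul_pow, hs2]
      rw [h2]; nlinarith
    exact lt_of_pow_lt_pow_left₀ 2 (by linarith) h1
  have e1 : (b - a)^2 = 2*a^2 - 1 := by linear_combination hkeyR
  have z : a*(b^2 - 2*a*b - a^2) = -a := by linear_combination a*hkeyR
  have z2 : b*(b^2 - 2*a*b - a^2) = -b := by linear_combination b*hkeyR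
  have hpos : (0:ℝ) < 2*a^2 - 1 := by nlinarith
  constructor
  · have h5 : Real.sqrt 2 * b * (2*a^2-1) < (a+b)*(2*a^2-1) :=
      mul_lt_mul_of_pos_right hsb hpos
    have h4 : 2*((a+b)*(2*a^2-1)) ≤ (4*a*b-4*a^2-1)*b := by nlinarith [z]
    have h6 : (2*Real.sqrt 2*(2*a^2-1))*b < (4*a*b-4*a^2-1)*b := by nlinarith [h5, h4]
    have hmain : 2*Real.sqrt 2*(2*a^2-1) < 4*a*b-4*a^2-1 :=
      lt_of_mul_lt_mul_right h6 hbpos.le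
    have hexp : silver^2 = 3 + 2*Real.sqrt 2 := by
      rw [silver]; linear_combination hs2
    rw [hHR, hexp, e1]
    nlinarith [hmain, hkeyR]
  · rw [hHR, hcR]
    linarith [z2, hba, ha1]
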